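/- Let A⁰, Aᵏ, A* be nonempty finite sets and suppose |A⁰| ≥ ε·|A*| for some ε > 0. Then |G(A⁰; Aᵏ) − G(A⁰; A*)| ≤ (1 + 1/√ε)·|A* ∆ Aᵏ|/|A*|, where G(A; B) = |A ∩ B|/√(|A|·|B|). -/

import Mathlib

open scoped symmDiff

/-!
Split `G(A⁰; Aᵏ) - G(A⁰; A*)` as
`(|A⁰ ∩ Aᵏ| - |A⁰ ∩ A*|) / √(|A⁰| |A*|) + G(A⁰; Aᵏ) (1 - √|Aᵏ| / √|A*|)`.
Both `|A⁰ ∩ Aᵏ| - |A⁰ ∩ A*|` and `|A*| - |Aᵏ|` are at most `|A* ∆ Aᵏ|` in absolute value.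
The first term is then controlled by `√(|A⁰| |A*|) ≥ √ε |A*|`, the second by `G ≤ 1` and
`|1 - √k / √s| ≤ |s - k| / s`.
-/

open Finset

namespace Finset

variable {α : Type*} [DecidableEq α]

lemma abs_card_sub_card_le_card_symmDiff (s t : Finset α) :
    |(#s : ℝ) - #t| ≤ #(s ∆ t) := by
  have card_le (s t : Finset α) : (#s : ℝ) ≤ #t + #(s ∆ t) := by
    rw [add_comm]
    exact_mod_cast (card_le_card (le_symmDiff_sup_right s t)).trans (card_union_le _ _)
  rw [abs_sub_le_iff]
  constructor
  · linarith [card_le s t]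
  · have := card_le t s
    rw [symmDiff_comm] at this
    linarith

lemma abs_card_inter_sub_card_inter_le_card_symmDiff (s t u : Finset α) :
    |(#(s ∩ t) : ℝ) - #(s ∩ u)| ≤ #(t ∆ u) :=
  calc |(#(s ∩ t) : ℝ) - #(s ∩ u)| ≤ #((s ∩ t) ∆ (s ∩ u)) :=
        abs_card_sub_card_le_card_symmDiff _ _
    _ = #(s ∩ t ∆ u) := by congr 2; exact (inf_symmDiff_distrib_left s t u).symm
    _ ≤ #(t ∆ u) := by exact_mod_cast card_le_card inter_subset_right

/-- The cosine of the angle between the indicator vectors of `s` and `t`: the paper's `G(s; t)`. -/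
noncomputable def cosineSimilarity (s t : Finset α) : ℝ :=
  #(s ∩ t) / √(#s * #t)

lemma cosineSimilarity_nonneg (s t : Finset α) : 0 ≤ cosineSimilarity s t := by
  unfold cosineSimilarity; positivity

lemma cosineSimilarity_le_one (s t : Finset α) : cosineSimilarity s t ≤ 1 := by
  refine div_le_one_of_le₀ ((Real.le_sqrt (by positivity) (by positivity)).2 ?_) (by positivity)
  rw [sq]
  exact_mod_cast Nat.mul_le_mul (card_le_card inter_subset_left) (card_le_card inter_subset_right)

lemma cosineSimilarity_sub_cosineSimilarity (s t u : Finset α) (ht : t.Nonempty) :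
    cosineSimilarity s t - cosineSimilarity s u =
      (#(s ∩ t) - #(s ∩ u)) / √(#s * #u) + cosineSimilarity s t * (1 - √(#t) / √(#u)) := by
  have : √(#t : ℝ) ≠ 0 := by positivity
  unfold cosineSimilarity
  rw [Real.sqrt_mul (Nat.cast_nonneg _), Real.sqrt_mul (Nat.cast_nonneg _)]
  field_simp
  ring

end Finset

lemma Real.abs_one_sub_sqrt_div_sqrt_le {x y : ℝ} (hx : 0 ≤ x) (hy : 0 < y) :
    |1 - √x / √y| ≤ |y - x| / y := by
  have hy' : 0 < √y := Real.sqrt_pos.2 hy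
  have key : |√y - √x| * √y ≤ |y - x| :=
    calc |√y - √x| * √y ≤ |√y - √x| * (√y + √x) := by
          gcongr
          exact le_add_of_nonneg_right (Real.sqrt_nonneg x)
      _ = |y - x| := by
        rw [← abs_of_nonneg (by positivity : 0 ≤ √y + √x), ← abs_mul]
        congr 1
        linear_combination Real.mul_self_sqrt hy.le - Real.mul_self_sqrt hx
  rw [one_sub_div hy'.ne', abs_div, abs_of_pos hy', div_le_div_iff₀ hy' hy]
  nlinarith [Real.mul_self_sqrt hy.le, abs_nonneg (√y - √x)]

theorem G_diff_bound_general {α : Type*} [DecidableEq α] (A0 Ak As : Finset α)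
    (hk : Ak.Nonempty) (hs : As.Nonempty)
    (ε : ℝ) (hε : 0 < ε) (hA0 : (A0.card : ℝ) ≥ ε * (As.card : ℝ)) :
    |((A0 ∩ Ak).card : ℝ) / Real.sqrt ((A0.card : ℝ) * (Ak.card : ℝ)) -
      ((A0 ∩ As).card : ℝ) / Real.sqrt ((A0.card : ℝ) * (As.card : ℝ))| ≤
      (1 + 1 / Real.sqrt ε) * ((As ∆ Ak).card : ℝ) / (As.card : ℝ) := by
  change |cosineSimilarity A0 Ak - cosineSimilarity A0 As| ≤ _
  have hs' : (0 : ℝ) < #As := by exact_mod_cast hs.card_pos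
  have hden : √ε * #As ≤ √(#A0 * #As) := by
    calc √ε * #As = √(ε * #As * #As) := by
          rw [mul_assoc, Real.sqrt_mul hε.le, Real.sqrt_mul_self hs'.le]
      _ ≤ √(#A0 * #As) := by gcongr
  rw [cosineSimilarity_sub_cosineSimilarity _ _ _ hk]
  calc _ ≤ |(#(A0 ∩ Ak) - #(A0 ∩ As) : ℝ)| / √(#A0 * #As) +
        cosineSimilarity A0 Ak * |1 - √(#Ak) / √(#As)| := by
        grw [abs_add_le, abs_div, abs_mul, abs_of_nonneg (Real.sqrt_nonneg _),
          abs_of_nonneg (cosineSimilarity_nonneg _ _)]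
    _ ≤ #(As ∆ Ak) / (√ε * #As) + 1 * (|(#As : ℝ) - #Ak| / #As) := by
        rw [symmDiff_comm]
        gcongr
        · exact abs_card_inter_sub_card_inter_le_card_symmDiff _ _ _
        · exact cosineSimilarity_le_one _ _
        · exact Real.abs_one_sub_sqrt_div_sqrt_le (Nat.cast_nonneg _) hs'
    _ ≤ #(As ∆ Ak) / (√ε * #As) + 1 * (#(As ∆ Ak) / #As) := by
        gcongr; exact abs_card_sub_card_le_card_symmDiff _ _
    _ = _ := by field_simp; ring

theorem G_diff_bound {α : Type*} [DecidableEq α] (A0 Ak As : Finset α)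
    (h0 : A0.Nonempty) (hk : Ak.Nonempty) (hs : As.Nonempty)
    (ε : ℝ) (hε : 0 < ε) (hA0 : (A0.card : ℝ) ≥ ε * (As.card : ℝ)) :
    |((A0 ∩ Ak).card : ℝ) / Real.sqrt ((A0.card : ℝ) * (Ak.card : ℝ)) -
      ((A0 ∩ As).card : ℝ) / Real.sqrt ((A0.card : ℝ) * (As.card : ℝ))| ≤
      (1 + 1 / Real.sqrt ε) * ((As ∆ Ak).card : ℝ) / (As.card : ℝ) :=
  G_diff_bound_general A0 Ak As hk hs ε hε hA0
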